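/- arXiv:math/0703220 — 3 statements merged into one kernel-verified Lean document; each statement's English description precedes it below -/
import Mathlib

section
/- Let 1 < p < ∞ with conjugate exponent p′ (1/p + 1/p′ = 1), and let σ > 1/p. Then there exists a constant c > 0, depending only on p and σ, such that for all measurable functions F, G : ℝ² → [0, ∞], the convolution (F ∗ G)(ξ, τ) := ∫∫ F(ξ₁, τ₁) G(ξ − ξ₁, τ − τ₁) dξ₁ dτ₁ satisfies (∫∫ ((F ∗ G)(ξ, τ))^{p′} dξ dτ)^{1/p′} ≤ c · (∫∫ ⟨τ + ξ⟩^{σ p′} F(ξ, τ)^{p′} dξ dτ)^{1/p′} · (∫∫ ⟨τ − ξ⟩^{σ p′} G(ξ, τ)^{p′} dξ dτ)^{1/p′}, all quantities understood in [0, ∞]. -/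
/-!
With `u = ⟨τ + ξ⟩^σ` and `v = ⟨τ - ξ⟩^σ`, write `(F ∗ G)(x) = ∫ (u F)(y) (v G)(x - y) (u(y) v(x - y))⁻¹ dy`.
Hölder in `y` with exponents `(p', p)` bounds this by
`(∫ (u F)^{p'}(y) (v G)^{p'}(x - y) dy)^{1/p'} · (∫ (u(y) v(x - y))^{-p} dy)^{1/p}`.
In the coordinates `τ + ξ`, `τ - ξ` the second integral factors as `2⁻¹ (∫ ⟨t⟩^{-σp} dt)²`, which is
finite because `σ p > 1` and does not depend on `x`. Integrating the `p'`-th power of the first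
factor over `x`, Tonelli and translation invariance give `‖u F‖_{p'}^{p'} ‖v G‖_{p'}^{p'}`.
-/

open MeasureTheory

/-- Japanese bracket ⟨x⟩ = (1 + x²)^{1/2}. -/
noncomputable def jap (x : ℝ) : ℝ := Real.sqrt (1 + x ^ 2)

open scoped ENNReal

theorem rpow_lintegral_le_lintegral_mul_rpow_mul {α : Type*} [MeasurableSpace α] {μ : Measure α}
    {p q : ℝ} (hpq : p.HolderConjugate q) {f w : α → ℝ≥0∞} (hf : AEMeasurable f μ)
    (hw : AEMeasurable w μ) (hw0 : ∀ a, w a ≠ 0) (hwt : ∀ a, w a ≠ ∞) :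
    (∫⁻ a, f a ∂μ) ^ p ≤ (∫⁻ a, (w a * f a) ^ p ∂μ) * (∫⁻ a, (w a)⁻¹ ^ q ∂μ) ^ (p / q) := by
  have hfactor : ∀ a, f a = (w a * f a) * (w a)⁻¹ := fun a => by
    rw [mul_comm (w a), mul_assoc, ENNReal.mul_inv_cancel (hw0 a) (hwt a), mul_one]
  have holder := ENNReal.lintegral_mul_le_Lp_mul_Lq μ hpq (hw.mul hf) hw.inv
  simp only [Pi.mul_apply, Pi.inv_apply] at holder
  rw [← lintegral_congr hfactor] at holder
  calc (∫⁻ a, f a ∂μ) ^ p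
      ≤ ((∫⁻ a, (w a * f a) ^ p ∂μ) ^ (1 / p) * (∫⁻ a, (w a)⁻¹ ^ q ∂μ) ^ (1 / q)) ^ p :=
        ENNReal.rpow_le_rpow holder hpq.nonneg
    _ = _ := by
      rw [ENNReal.mul_rpow_of_nonneg _ _ hpq.nonneg, ← ENNReal.rpow_mul, ← ENNReal.rpow_mul,
        one_div_mul_cancel hpq.ne_zero, ENNReal.rpow_one, one_div_mul_eq_div]

section Convolution

variable {G : Type*} [AddGroup G] [MeasurableSpace G] [MeasurableAdd₂ G] [MeasurableNeg G]
  {μ : Measure G} [SFinite μ] [μ.IsAddRightInvariant]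

theorem lintegral_lintegral_mul_sub {f g : G → ℝ≥0∞} (hf : Measurable f) (hg : Measurable g) :
    ∫⁻ x, ∫⁻ y, f y * g (x - y) ∂μ ∂μ = (∫⁻ x, f x ∂μ) * ∫⁻ x, g x ∂μ := by
  rw [lintegral_lintegral_swap (by fun_prop)]
  calc ∫⁻ y, ∫⁻ x, f y * g (x - y) ∂μ ∂μ = ∫⁻ y, f y * ∫⁻ x, g x ∂μ ∂μ := by
        congr 1 with y
        rw [lintegral_const_mul _ (by fun_prop), lintegral_sub_right_eq_self]
    _ = _ := lintegral_mul_const _ hf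

theorem rpow_lintegral_convolution_le {p q : ℝ} (hpq : p.HolderConjugate q)
    {f g u v : G → ℝ≥0∞} (hf : Measurable f) (hg : Measurable g) (hu : Measurable u)
    (hv : Measurable v) (hu0 : ∀ x, u x ≠ 0) (hut : ∀ x, u x ≠ ∞) (hv0 : ∀ x, v x ≠ 0)
    (hvt : ∀ x, v x ≠ ∞) {K : ℝ≥0∞} (hK : ∀ x, ∫⁻ y, (u y * v (x - y))⁻¹ ^ q ∂μ ≤ K) :
    (∫⁻ x, (∫⁻ y, f y * g (x - y) ∂μ) ^ p ∂μ) ^ (1 / p) ≤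
      K ^ (1 / q) * (∫⁻ x, (u x * f x) ^ p ∂μ) ^ (1 / p) * (∫⁻ x, (v x * g x) ^ p ∂μ) ^ (1 / p) := by
  set Φ := fun x => (u x * f x) ^ p
  set Ψ := fun x => (v x * g x) ^ p
  have pointwise : ∀ x, (∫⁻ y, f y * g (x - y) ∂μ) ^ p ≤
      (∫⁻ y, Φ y * Ψ (x - y) ∂μ) * K ^ (p / q) := fun x => by
    calc (∫⁻ y, f y * g (x - y) ∂μ) ^ p
        ≤ (∫⁻ y, (u y * v (x - y) * (f y * g (x - y))) ^ p ∂μ) *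
            (∫⁻ y, (u y * v (x - y))⁻¹ ^ q ∂μ) ^ (p / q) :=
          rpow_lintegral_le_lintegral_mul_rpow_mul hpq (by fun_prop) (by fun_prop)
            (fun y => mul_ne_zero (hu0 y) (hv0 _)) (fun y => ENNReal.mul_ne_top (hut y) (hvt _))
      _ ≤ _ := by
        gcongr with y
        · rw [mul_mul_mul_comm, ENNReal.mul_rpow_of_nonneg _ _ hpq.nonneg]
        · exact div_nonneg hpq.nonneg hpq.symm.nonneg
        · exact hK x
  have hp : 0 ≤ 1 / p := one_div_nonneg.2 hpq.nonneg
  calc (∫⁻ x, (∫⁻ y, f y * g (x - y) ∂μ) ^ p ∂μ) ^ (1 / p)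
      ≤ ((∫⁻ x, ∫⁻ y, Φ y * Ψ (x - y) ∂μ ∂μ) * K ^ (p / q)) ^ (1 / p) := by
        refine ENNReal.rpow_le_rpow ?_ hp
        calc ∫⁻ x, (∫⁻ y, f y * g (x - y) ∂μ) ^ p ∂μ
            ≤ ∫⁻ x, (∫⁻ y, Φ y * Ψ (x - y) ∂μ) * K ^ (p / q) ∂μ := lintegral_mono pointwise
          _ = _ := lintegral_mul_const _ (Measurable.lintegral_prod_right (by fun_prop))
    _ = _ := by
      have hexp : p / q * (1 / p) = 1 / q := by field_simp [hpq.ne_zero]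
      rw [lintegral_lintegral_mul_sub (by fun_prop) (by fun_prop),
        ENNReal.mul_rpow_of_nonneg _ _ hp, ENNReal.mul_rpow_of_nonneg _ _ hp,
        ← ENNReal.rpow_mul, hexp]
      ring

end Convolution

theorem lintegral_comp_mul_left {g : ℝ → ℝ≥0∞} (hg : Measurable g) {a : ℝ} (ha : a ≠ 0) :
    ∫⁻ x, g (a * x) = ENNReal.ofReal |a⁻¹| * ∫⁻ x, g x := by
  rw [← lintegral_map hg (measurable_const_mul a), Real.map_volume_mul_left ha,
    lintegral_smul_measure, smul_eq_mul]

theorem lintegral_comp_sub_mul {g : ℝ → ℝ≥0∞} (hg : Measurable g) (y : ℝ) {a : ℝ}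
    (ha : a ≠ 0) : ∫⁻ x, g (y - a * x) = ENNReal.ofReal |a⁻¹| * ∫⁻ x, g x := by
  have hshift : ∀ x, g (y - a * x) = g (-a * (x - y / a)) := fun x => by
    congr 1
    field_simp
    ring
  rw [lintegral_congr hshift, lintegral_sub_right_eq_self (fun x => g (-a * x)),
    lintegral_comp_mul_left hg (neg_ne_zero.2 ha), inv_neg, abs_neg]

theorem lintegral_comp_add_mul_comp_sub {f g : ℝ → ℝ≥0∞} (hf : Measurable f)
    (hg : Measurable g) :
    ∫⁻ z : ℝ × ℝ, f (z.2 + z.1) * g (z.2 - z.1) = 2⁻¹ * (∫⁻ t, f t) * ∫⁻ t, g t := by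
  rw [Measure.volume_eq_prod, lintegral_prod _ (by fun_prop)]
  have hshift : ∀ x, ∫⁻ y, f (y + x) * g (y - x) = ∫⁻ y, f y * g (y - 2 * x) := fun x => by
    rw [← lintegral_add_right_eq_self (fun y => f y * g (y - 2 * x)) x]
    congr 1 with y
    ring_nf
  have hinner : ∀ y, ∫⁻ x, f y * g (y - 2 * x) = f y * (2⁻¹ * ∫⁻ t, g t) := fun y => by
    rw [lintegral_const_mul _ (by fun_prop), lintegral_comp_sub_mul hg y two_ne_zero, abs_inv,
      abs_two, ENNReal.ofReal_inv_of_pos two_pos, ENNReal.ofReal_ofNat]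
  simp_rw [hshift]
  rw [lintegral_lintegral_swap (by fun_prop)]
  simp_rw [hinner]
  rw [lintegral_mul_const _ hf]
  ring

lemma jap_pos (x : ℝ) : 0 < jap x := Real.sqrt_pos.2 (by positivity)

@[fun_prop]
lemma measurable_jap : Measurable jap := by
  unfold jap
  fun_prop

lemma ofReal_jap_rpow_rpow (e r t : ℝ) :
    ENNReal.ofReal (jap t ^ e) ^ r = ENNReal.ofReal (jap t ^ (e * r)) := by
  rw [ENNReal.ofReal_rpow_of_pos (Real.rpow_pos_of_pos (jap_pos t) e),
    ← Real.rpow_mul (jap_pos t).le]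

lemma inv_ofReal_jap_rpow (e t : ℝ) :
    (ENNReal.ofReal (jap t ^ e))⁻¹ = ENNReal.ofReal (jap t ^ (-e)) := by
  rw [← ENNReal.ofReal_inv_of_pos (Real.rpow_pos_of_pos (jap_pos t) e),
    ← Real.rpow_neg (jap_pos t).le]

lemma ofReal_jap_rpow_ne_zero (e t : ℝ) : ENNReal.ofReal (jap t ^ e) ≠ 0 :=
  (ENNReal.ofReal_pos.2 (Real.rpow_pos_of_pos (jap_pos t) e)).ne'

lemma lintegral_ofReal_jap_rpow_neg_lt_top {s : ℝ} (hs : 1 < s) :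
    ∫⁻ t : ℝ, ENNReal.ofReal (jap t ^ (-s)) < ∞ := by
  have hjap : ∀ t : ℝ, jap t ^ (-s) = (1 + ‖t‖ ^ 2) ^ (-s / 2) := fun t => by
    rw [jap, Real.sqrt_eq_rpow, ← Real.rpow_mul (by positivity), Real.norm_eq_abs, sq_abs]
    ring_nf
  simp_rw [hjap]
  exact (integrable_rpow_neg_one_add_norm_sq (by simpa using hs)).lintegral_lt_top

theorem lintegral_inv_jap_weights_rpow (σ p : ℝ) (hp : 0 ≤ p) (x : ℝ × ℝ) :
    ∫⁻ y : ℝ × ℝ, (ENNReal.ofReal (jap (y.2 + y.1) ^ σ) *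
        ENNReal.ofReal (jap ((x - y).2 - (x - y).1) ^ σ))⁻¹ ^ p =
      2⁻¹ * (∫⁻ t, ENNReal.ofReal (jap t ^ (-(σ * p)))) ^ 2 := by
  set f := fun t => ENNReal.ofReal (jap t ^ (-(σ * p)))
  have hf : Measurable f := by fun_prop
  have hsplit : ∀ y : ℝ × ℝ, (ENNReal.ofReal (jap (y.2 + y.1) ^ σ) *
      ENNReal.ofReal (jap ((x - y).2 - (x - y).1) ^ σ))⁻¹ ^ p =
      f (y.2 + y.1) * f ((x.2 - x.1) - (y.2 - y.1)) := fun y => by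
    rw [ENNReal.mul_inv (.inl (ofReal_jap_rpow_ne_zero _ _)) (.inl ENNReal.ofReal_ne_top),
      ENNReal.mul_rpow_of_nonneg _ _ hp, inv_ofReal_jap_rpow, inv_ofReal_jap_rpow,
      ofReal_jap_rpow_rpow, ofReal_jap_rpow_rpow, Prod.snd_sub, Prod.fst_sub, neg_mul,
      sub_sub_sub_comm]
  rw [lintegral_congr hsplit,
    lintegral_comp_add_mul_comp_sub (g := fun t => f (x.2 - x.1 - t)) hf (by fun_prop),
    lintegral_sub_left_eq_self f, sq, mul_assoc]

/-- Corollary 2.1, Fourier-side: for 1 < p < ∞, σ > 1/p, the convolution of two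
nonnegative functions satisfies
‖F ∗ G‖_{p′} ≤ c ‖⟨τ+ξ⟩^σ F‖_{p′} ‖⟨τ−ξ⟩^σ G‖_{p′}. -/
theorem stmt_4 (p p' σ : ℝ) (hp : 1 < p) (hpp' : 1 / p + 1 / p' = 1) (hσ : 1 / p < σ) :
    ∃ c : ℝ, 0 < c ∧ ∀ F G : ℝ × ℝ → ENNReal, Measurable F → Measurable G →
      (∫⁻ q : ℝ × ℝ, (∫⁻ z : ℝ × ℝ, F z * G (q.1 - z.1, q.2 - z.2)) ^ p') ^ (1 / p') ≤
        ENNReal.ofReal c *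
          (∫⁻ q : ℝ × ℝ, ENNReal.ofReal (jap (q.2 + q.1) ^ (σ * p')) * F q ^ p') ^ (1 / p') *
          (∫⁻ q : ℝ × ℝ, ENNReal.ofReal (jap (q.2 - q.1) ^ (σ * p')) * G q ^ p') ^ (1 / p') := by
  have hpp : p'.HolderConjugate p :=
    (Real.holderConjugate_iff.2 ⟨hp, by simpa only [one_div] using hpp'⟩).symm
  have hσp : 1 < σ * p := by rwa [div_lt_iff₀ (zero_lt_one.trans hp)] at hσ
  set K := 2⁻¹ * (∫⁻ t, ENNReal.ofReal (jap t ^ (-(σ * p)))) ^ 2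
  have hK : K ^ (1 / p) ≠ ∞ :=
    ENNReal.rpow_ne_top_of_nonneg (by positivity) (ENNReal.mul_ne_top (by norm_num)
      (ENNReal.pow_ne_top (lintegral_ofReal_jap_rpow_neg_lt_top hσp).ne))
  refine ⟨(K ^ (1 / p)).toReal + 1, by positivity, fun F G hF hG => ?_⟩
  have key := rpow_lintegral_convolution_le (μ := (volume : Measure (ℝ × ℝ))) hpp hF hG
    (u := fun y => ENNReal.ofReal (jap (y.2 + y.1) ^ σ))
    (v := fun y => ENNReal.ofReal (jap (y.2 - y.1) ^ σ)) (by fun_prop) (by fun_prop)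
    (fun _ => ofReal_jap_rpow_ne_zero _ _) (fun _ => ENNReal.ofReal_ne_top)
    (fun _ => ofReal_jap_rpow_ne_zero _ _) (fun _ => ENNReal.ofReal_ne_top) (K := K)
    (by intro x; exact (lintegral_inv_jap_weights_rpow σ p (zero_lt_one.trans hp).le x).le)
  simp only [ENNReal.mul_rpow_of_nonneg _ _ hpp.nonneg, ofReal_jap_rpow_rpow] at key
  refine key.trans ?_
  gcongr
  exact (ENNReal.le_ofReal_iff_toReal_le hK (by positivity)).2 (le_add_of_nonneg_right zero_le_one)
end

section
/- Let 1 < w₁, w₂, w₃ < ∞ with 1/w₃ > 1/w₁ and 1/w₃ > 1/w₂, and define v₁, v₂ by 1/v₁ := 1/w₃ − 1/w₁ and 1/v₂ := 1/w₃ − 1/w₂; let v₁′, v₂′, w₃′ denote the respective conjugate exponents. Let ε > 0 and let φ : ℝ → ℝ be measurable. Then there exists a constant c > 0, depending only on w₁, w₂, w₃ and ε (in particular independent of φ), such that for every measurable function w : ℝ² → [0, ∞], (∫_ℝ (∫_ℝ w(ξ, τ)^{v₂′} dτ)^{v₁′/v₂′} dξ)^{1/v₁′} ≤ c · (∫∫_{ℝ²}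 ⟨ξ⟩^{(1/w₁ + ε) w₃′} ⟨τ + φ(ξ)⟩^{(1/w₂ + ε) w₃′} w(ξ, τ)^{w₃′} dξ dτ)^{1/w₃′}, all quantities understood in [0, ∞]. -/
open MeasureTheory

open scoped ENNReal

lemma one_le_jap (x : ℝ) : 1 ≤ jap x :=
  Real.one_le_sqrt.mpr (by nlinarith [sq_nonneg x])

noncomputable def japNegPowLpNorm (s r : ℝ) : ℝ≥0∞ :=
  (∫⁻ x, ENNReal.ofReal (jap x ^ (-(s * r)))) ^ (1 / r)

lemma japNegPowLpNorm_ne_top {s r : ℝ} (hr : 0 < r) (hsr : 1 < s * r) :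
    japNegPowLpNorm s r ≠ ∞ := by
  have hint : Integrable fun x : ℝ => (1 + ‖x‖ ^ 2) ^ (-(s * r) / 2) :=
    integrable_rpow_neg_one_add_norm_sq (by simpa using hsr)
  have hjap : ∀ x, jap x ^ (-(s * r)) = (1 + ‖x‖ ^ 2) ^ (-(s * r) / 2) := fun x => by
    rw [jap, Real.sqrt_eq_rpow, ← Real.rpow_mul (by positivity), Real.norm_eq_abs, sq_abs]
    ring_nf
  refine ENNReal.rpow_ne_top_of_nonneg (by positivity) ?_
  simp_rw [hjap]
  exact ((hasFiniteIntegral_iff_ofReal (.of_forall fun x => by positivity)).1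
    hint.hasFiniteIntegral).ne

lemma pos_and_lt_of_one_div_eq_add {p q r : ℝ} (hq : 0 < q) (hr : 0 < r)
    (hpqr : 1 / p = 1 / q + 1 / r) : 0 < p ∧ p < q := by
  have hp : 0 < p := one_div_pos.mp (by rw [hpqr]; positivity)
  refine ⟨hp, (one_div_lt_one_div hq hp).mp ?_⟩
  rw [hpqr]
  simpa using hr

theorem lintegral_rpow_rpow_le_weighted {α : Type*} [MeasurableSpace α] {p q r : ℝ} (hq : 0 < q)
    (hr : 0 < r) (hpqr : 1 / p = 1 / q + 1 / r) (μ : Measure α) {f g : α → ℝ≥0∞}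
    (hf : AEMeasurable f μ) (hg : AEMeasurable g μ) (hg0 : ∀ a, g a ≠ 0) (hg_top : ∀ a, g a ≠ ∞) :
    (∫⁻ a, f a ^ p ∂μ) ^ (1 / p) ≤
      (∫⁻ a, (g a * f a) ^ q ∂μ) ^ (1 / q) * (∫⁻ a, (g a)⁻¹ ^ r ∂μ) ^ (1 / r) := by
  obtain ⟨hp, hpq⟩ := pos_and_lt_of_one_div_eq_add hq hr hpqr
  have hcancel : ∀ a, g a * f a * (g a)⁻¹ = f a := fun a => by
    rw [mul_comm (g a), mul_assoc, ENNReal.mul_inv_cancel (hg0 a) (hg_top a), mul_one]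
  simpa [hcancel] using
    ENNReal.lintegral_Lp_mul_le_Lq_mul_Lr hp hpq hpqr μ (hg.mul hf) hg.inv

theorem lintegral_rpow_rpow_le_jap_weighted {p q r : ℝ} (s t : ℝ) (hq : 0 < q) (hr : 0 < r)
    (hpqr : 1 / p = 1 / q + 1 / r) {f : ℝ → ℝ≥0∞} (hf : AEMeasurable f) :
    (∫⁻ x, f x ^ p) ^ (1 / p) ≤
      (∫⁻ x, ENNReal.ofReal (jap (x + t) ^ (s * q)) * f x ^ q) ^ (1 / q) * japNegPowLpNorm s r := by
  have hweight : ∀ x, 0 < jap (x + t) ^ s := fun x => Real.rpow_pos_of_pos (jap_pos _) s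
  have H := lintegral_rpow_rpow_le_weighted hq hr hpqr volume hf
    (g := fun x => ENNReal.ofReal (jap (x + t) ^ s)) (by fun_prop)
    (fun x => ENNReal.ofReal_pos.mpr (hweight x) |>.ne') (fun _ => ENNReal.ofReal_ne_top)
  have hmul : ∀ x, (ENNReal.ofReal (jap (x + t) ^ s) * f x) ^ q =
      ENNReal.ofReal (jap (x + t) ^ (s * q)) * f x ^ q := fun x => by
    rw [ENNReal.mul_rpow_of_nonneg _ _ hq.le, ENNReal.ofReal_rpow_of_pos (hweight x),
      ← Real.rpow_mul (jap_pos _).le]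
  have hinv : ∀ x, (ENNReal.ofReal (jap (x + t) ^ s))⁻¹ ^ r =
      ENNReal.ofReal (jap (x + t) ^ (-(s * r))) := fun x => by
    rw [← ENNReal.ofReal_inv_of_pos (hweight x),
      ENNReal.ofReal_rpow_of_pos (inv_pos.mpr (hweight x)), ← Real.rpow_neg (jap_pos _).le,
      ← Real.rpow_mul (jap_pos _).le, neg_mul]
  simp_rw [hmul, hinv] at H
  rwa [lintegral_add_right_eq_self (fun x => ENNReal.ofReal (jap x ^ (-(s * r)))) t] at H

theorem lintegral_mul_const_rpow_rpow {α : Type*} [MeasurableSpace α] {p : ℝ} (hp : 0 < p)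
    (μ : Measure α) {f : α → ℝ≥0∞} (hf : AEMeasurable f μ) (c : ℝ≥0∞) :
    (∫⁻ a, (f a * c) ^ p ∂μ) ^ (1 / p) = (∫⁻ a, f a ^ p ∂μ) ^ (1 / p) * c := by
  simp_rw [ENNReal.mul_rpow_of_nonneg _ _ hp.le]
  rw [lintegral_mul_const'' _ (hf.pow_const p), ENNReal.mul_rpow_of_nonneg _ _ (by positivity),
    one_div, ENNReal.rpow_rpow_inv hp.ne']

theorem mixed_lintegral_le_jap_weighted {p₁ p₂ q r₁ r₂ : ℝ} (a b : ℝ) (hq : 0 < q)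
    (hr₁ : 0 < r₁) (hr₂ : 0 < r₂) (hp₁ : 1 / p₁ = 1 / q + 1 / r₁) (hp₂ : 1 / p₂ = 1 / q + 1 / r₂)
    {φ : ℝ → ℝ} (hφ : Measurable φ) {w : ℝ × ℝ → ℝ≥0∞} (hw : Measurable w) :
    (∫⁻ ξ, ((∫⁻ τ, w (ξ, τ) ^ p₂) ^ (1 / p₂)) ^ p₁) ^ (1 / p₁) ≤
      (∫⁻ z : ℝ × ℝ, ENNReal.ofReal (jap z.1 ^ (a * q) * jap (z.2 + φ z.1) ^ (b * q)) *
        w z ^ q) ^ (1 / q) * japNegPowLpNorm a r₁ * japNegPowLpNorm b r₂ := by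
  set F : ℝ → ℝ≥0∞ := fun ξ =>
    (∫⁻ τ, ENNReal.ofReal (jap (τ + φ ξ) ^ (b * q)) * w (ξ, τ) ^ q) ^ (1 / q)
  have inner : ∀ ξ, (∫⁻ τ, w (ξ, τ) ^ p₂) ^ (1 / p₂) ≤ F ξ * japNegPowLpNorm b r₂ := fun ξ =>
    lintegral_rpow_rpow_le_jap_weighted b (φ ξ) hq hr₂ hp₂
      (hw.comp measurable_prodMk_left).aemeasurable
  have hF : Measurable F := by fun_prop
  have tonelli : ∫⁻ ξ, ENNReal.ofReal (jap (ξ + 0) ^ (a * q)) * F ξ ^ q =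
      ∫⁻ z : ℝ × ℝ, ENNReal.ofReal (jap z.1 ^ (a * q) * jap (z.2 + φ z.1) ^ (b * q)) * w z ^ q := by
    simp only [F]
    rw [Measure.volume_eq_prod, lintegral_prod _ (by fun_prop)]
    refine lintegral_congr fun ξ => ?_
    rw [add_zero, one_div, ENNReal.rpow_inv_rpow hq.ne', ← lintegral_const_mul _ (by fun_prop)]
    simp_rw [ENNReal.ofReal_mul (Real.rpow_nonneg (jap_pos ξ).le _), mul_assoc]
  have hp₁_pos := (pos_and_lt_of_one_div_eq_add hq hr₁ hp₁).1
  calc (∫⁻ ξ, ((∫⁻ τ, w (ξ, τ) ^ p₂) ^ (1 / p₂)) ^ p₁) ^ (1 / p₁)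
      ≤ (∫⁻ ξ, (F ξ * japNegPowLpNorm b r₂) ^ p₁) ^ (1 / p₁) := by
        gcongr with ξ
        exact inner ξ
    _ = (∫⁻ ξ, F ξ ^ p₁) ^ (1 / p₁) * japNegPowLpNorm b r₂ :=
        lintegral_mul_const_rpow_rpow hp₁_pos volume hF.aemeasurable _
    _ ≤ _ := by
        gcongr
        simpa only [tonelli] using
          lintegral_rpow_rpow_le_jap_weighted a 0 hq hr₁ hp₁ hF.aemeasurable

theorem stmt_8_general (w₁ w₂ w₃ v₁ v₂ v₁' v₂' w₃' ε : ℝ)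
    (hw₁ : 1 < w₁) (hw₂ : 1 < w₂) (hw₃ : 1 < w₃)
    (hv₁ : 1 / v₁ = 1 / w₃ - 1 / w₁) (hv₂ : 1 / v₂ = 1 / w₃ - 1 / w₂)
    (hv₁' : 1 / v₁ + 1 / v₁' = 1) (hv₂' : 1 / v₂ + 1 / v₂' = 1)
    (hw₃' : 1 / w₃ + 1 / w₃' = 1) (hε : 0 < ε) :
    ∃ c : ℝ, 0 < c ∧ ∀ φ : ℝ → ℝ, Measurable φ → ∀ w : ℝ × ℝ → ENNReal, Measurable w →
      (∫⁻ ξ : ℝ, (∫⁻ τ : ℝ, w (ξ, τ) ^ v₂') ^ (v₁' / v₂')) ^ (1 / v₁') ≤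
        ENNReal.ofReal c *
          (∫⁻ q : ℝ × ℝ,
            ENNReal.ofReal (jap q.1 ^ ((1 / w₁ + ε) * w₃') *
              jap (q.2 + φ q.1) ^ ((1 / w₂ + ε) * w₃')) * w q ^ w₃') ^ (1 / w₃') := by
  have hw₁_pos : 0 < w₁ := by linarith
  have hw₂_pos : 0 < w₂ := by linarith
  have hw₃'_pos : 0 < w₃' := one_div_pos.mp (by linarith [(div_lt_one (by linarith)).mpr hw₃])
  have integrable_exponent {r : ℝ} (hr : 0 < r) : 1 < (1 / r + ε) * r := by
    rw [add_mul, one_div_mul_cancel hr.ne']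
    nlinarith
  set C := japNegPowLpNorm (1 / w₁ + ε) w₁ * japNegPowLpNorm (1 / w₂ + ε) w₂
  have hC : C ≠ ∞ := ENNReal.mul_ne_top
    (japNegPowLpNorm_ne_top hw₁_pos (integrable_exponent hw₁_pos))
    (japNegPowLpNorm_ne_top hw₂_pos (integrable_exponent hw₂_pos))
  refine ⟨max 1 C.toReal, by positivity, fun φ hφ w hw => ?_⟩
  calc (∫⁻ ξ, (∫⁻ τ, w (ξ, τ) ^ v₂') ^ (v₁' / v₂')) ^ (1 / v₁')
      = (∫⁻ ξ, ((∫⁻ τ, w (ξ, τ) ^ v₂') ^ (1 / v₂')) ^ v₁') ^ (1 / v₁') := by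
        simp_rw [← ENNReal.rpow_mul, one_div_mul_eq_div]
    _ ≤ C * _ := by
        rw [mul_comm, ← mul_assoc]
        exact mixed_lintegral_le_jap_weighted _ _ hw₃'_pos hw₁_pos hw₂_pos (by linarith)
          (by linarith) hφ hw
    _ ≤ _ := by
        gcongr
        exact (ENNReal.le_ofReal_iff_toReal_le hC (by positivity)).mpr (le_max_right _ _)

/-- Embedding (2.4), Fourier-side: mixed-norm estimate
(∫_ξ (∫_τ w^{v₂′})^{v₁′/v₂′})^{1/v₁′}
  ≤ c (∫∫ ⟨ξ⟩^{(1/w₁+ε)w₃′} ⟨τ+φ(ξ)⟩^{(1/w₂+ε)w₃′} w^{w₃′})^{1/w₃′},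
where 1/v₁ = 1/w₃ − 1/w₁, 1/v₂ = 1/w₃ − 1/w₂, with c independent of φ. -/
theorem stmt_8 (w₁ w₂ w₃ v₁ v₂ v₁' v₂' w₃' ε : ℝ)
    (hw₁ : 1 < w₁) (hw₂ : 1 < w₂) (hw₃ : 1 < w₃)
    (h₁ : 1 / w₃ > 1 / w₁) (h₂ : 1 / w₃ > 1 / w₂)
    (hv₁ : 1 / v₁ = 1 / w₃ - 1 / w₁) (hv₂ : 1 / v₂ = 1 / w₃ - 1 / w₂)
    (hv₁' : 1 / v₁ + 1 / v₁' = 1) (hv₂' : 1 / v₂ + 1 / v₂' = 1)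
    (hw₃' : 1 / w₃ + 1 / w₃' = 1) (hε : 0 < ε) :
    ∃ c : ℝ, 0 < c ∧ ∀ φ : ℝ → ℝ, Measurable φ → ∀ w : ℝ × ℝ → ENNReal, Measurable w →
      (∫⁻ ξ : ℝ, (∫⁻ τ : ℝ, w (ξ, τ) ^ v₂') ^ (v₁' / v₂')) ^ (1 / v₁') ≤
        ENNReal.ofReal c *
          (∫⁻ q : ℝ × ℝ,
            ENNReal.ofReal (jap q.1 ^ ((1 / w₁ + ε) * w₃') *
              jap (q.2 + φ q.1) ^ ((1 / w₂ + ε) * w₃')) * w q ^ w₃') ^ (1 / w₃') :=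
  stmt_8_general w₁ w₂ w₃ v₁ v₂ v₁' v₂' w₃' ε hw₁ hw₂ hw₃ hv₁ hv₂ hv₁' hv₂' hw₃' hε
end

section
/- Let 1 < r, r₁ < ∞ with 1/r > 1/r₁, define r₂ by 1/r₂ := 1/r − 1/r₁, and let r′, r₂′ denote conjugate exponents. Let ε > 0 and let φ : ℝ → ℝ be measurable. Then there exists a constant c > 0, depending only on r, r₁ and ε (in particular independent of φ), such that for every measurable function w : ℝ² → [0, ∞], ∫_ℝ (∫_ℝ w(ξ, τ)^{r₂′} dτ)^{1/r₂′} dξ ≤ c · (∫∫_{ℝ²} ⟨ξ⟩^{(1/r + ε) r′} ⟨τ + φ(ξ)⟩^{(1/r₁ + ε) r′} w(ξ, τ)^{r′} dξ dτ)^{1/r′}, all quantities understood in [0, ∞]. -/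
/-!
Apply Hölder's inequality twice, each time splitting off a Japanese-bracket weight.
For fixed `ξ`, Hölder in `τ` with `1/r₂′ = 1/r′ + 1/r₁` and weight `⟨τ + φ ξ⟩^{(1/r₁+ε)r′}`
bounds the inner norm by `K₁^{1/r₁} G(ξ)^{1/r′}`, where `G(ξ) = ∫ ⟨τ + φ ξ⟩^{(1/r₁+ε)r′} w^{r′} dτ`;
the leftover weight is `⟨τ + φ ξ⟩^{-(1+εr₁)}`, whose integral `K₁` does not depend on `φ ξ` by
translation invariance. Hölder in `ξ` with `1 = 1/r + 1/r′` and weight `⟨ξ⟩^{(1/r+ε)r′}` then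
bounds `∫ G^{1/r′}` by `K₂^{1/r} (∫ ⟨ξ⟩^{(1/r+ε)r′} G)^{1/r′}`, with `K₂ = ∫ ⟨ξ⟩^{-(1+εr)}`.
Both constants are finite because `ε > 0` pushes the decay exponents above `1`.
-/

open MeasureTheory

open scoped ENNReal

lemma ofReal_jap_rpow_rpow_s9 (x a b : ℝ) :
    ENNReal.ofReal (jap x ^ a) ^ b = ENNReal.ofReal (jap x ^ (a * b)) := by
  rw [ENNReal.ofReal_rpow_of_pos (Real.rpow_pos_of_pos (jap_pos x) a),
    ← Real.rpow_mul (jap_pos x).le]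

noncomputable def japIntegral (β : ℝ) : ℝ≥0∞ := ∫⁻ x, ENNReal.ofReal (jap x ^ (-β))

lemma japIntegral_ne_top {β : ℝ} (hβ : 1 < β) : japIntegral β ≠ ∞ := by
  have h : ∀ x : ℝ, jap x ^ (-β) = (1 + ‖x‖ ^ 2) ^ (-β / 2) := fun x => by
    rw [Real.norm_eq_abs, sq_abs, jap, Real.sqrt_eq_rpow, ← Real.rpow_mul (by positivity)]
    ring_nf
  simp_rw [japIntegral, h]
  exact (integrable_rpow_neg_one_add_norm_sq (by simpa using hβ)).lintegral_lt_top.ne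

-- Hölder's inequality applied to `f = B^{-1/p} · (B^{1/p} f)`.
theorem lintegral_rpow_le_weighted {α : Type*} [MeasurableSpace α] {μ : Measure α}
    {s q p : ℝ} (hs : 0 < s) (hsq : s < q) (hsqp : 1 / s = 1 / q + 1 / p)
    {f B : α → ℝ≥0∞} (hf : AEMeasurable f μ) (hB : AEMeasurable B μ)
    (hB0 : ∀ x, B x ≠ 0) (hBtop : ∀ x, B x ≠ ∞) :
    (∫⁻ x, f x ^ s ∂μ) ^ (1 / s) ≤
      (∫⁻ x, B x ^ (-(q / p)) ∂μ) ^ (1 / q) * (∫⁻ x, B x * f x ^ p ∂μ) ^ (1 / p) := by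
  have hp : 0 < p := by
    have : 1 / q < 1 / s := one_div_lt_one_div_of_lt hs hsq
    exact one_div_pos.mp (by linarith)
  have hfactor : ∀ x, f x = B x ^ (-(1 / p)) * (B x ^ (1 / p) * f x) := fun x => by
    rw [← mul_assoc, ← ENNReal.rpow_add _ _ (hB0 x) (hBtop x), neg_add_cancel,
      ENNReal.rpow_zero, one_mul]
  calc (∫⁻ x, f x ^ s ∂μ) ^ (1 / s)
      = (∫⁻ x, (B x ^ (-(1 / p)) * (B x ^ (1 / p) * f x)) ^ s ∂μ) ^ (1 / s) := by
        simp_rw [← hfactor]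
    _ ≤ (∫⁻ x, (B x ^ (-(1 / p))) ^ q ∂μ) ^ (1 / q) *
          (∫⁻ x, (B x ^ (1 / p) * f x) ^ p ∂μ) ^ (1 / p) :=
        ENNReal.lintegral_Lp_mul_le_Lq_mul_Lr hs hsq hsqp μ
          (hB.pow_const _) ((hB.pow_const _).mul hf)
    _ = _ := by
        simp_rw [ENNReal.mul_rpow_of_nonneg _ _ hp.le, ← ENNReal.rpow_mul, neg_mul,
          one_div_mul_cancel hp.ne', one_div_mul_eq_div, ENNReal.rpow_one]

theorem lintegral_rpow_le_jap_weighted {s q p b β : ℝ} (hs : 0 < s) (hsq : s < q)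
    (hsqp : 1 / s = 1 / q + 1 / p) (hbβ : b * (q / p) = β) (c : ℝ) {g : ℝ → ℝ≥0∞}
    (hg : AEMeasurable g) :
    (∫⁻ τ, g τ ^ s) ^ (1 / s) ≤
      japIntegral β ^ (1 / q) * (∫⁻ τ, ENNReal.ofReal (jap (τ + c) ^ b) * g τ ^ p) ^ (1 / p) := by
  have h := lintegral_rpow_le_weighted hs hsq hsqp hg (by fun_prop)
    (fun τ => (ENNReal.ofReal_pos.mpr (Real.rpow_pos_of_pos (jap_pos (τ + c)) b)).ne')
    (fun _ => ENNReal.ofReal_ne_top)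
  simp_rw [ofReal_jap_rpow_rpow_s9, mul_neg, hbβ] at h
  rwa [lintegral_add_right_eq_self (fun τ => ENNReal.ofReal (jap τ ^ (-β))) c] at h

theorem lintegral_lintegral_rpow_le_jap_weighted {r r' r₁ s ε : ℝ} (hr : 1 < r)
    (hrr' : 1 / r + 1 / r' = 1) (hr₁ : 0 < r₁) (hs : 1 / s = 1 / r' + 1 / r₁) (hε : 0 < ε)
    {φ : ℝ → ℝ} (hφ : Measurable φ) {w : ℝ × ℝ → ℝ≥0∞} (hw : Measurable w) :
    ∫⁻ ξ, (∫⁻ τ, w (ξ, τ) ^ s) ^ (1 / s) ≤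
      japIntegral (1 + ε * r₁) ^ (1 / r₁) * japIntegral (1 + ε * r) ^ (1 / r) *
        (∫⁻ q : ℝ × ℝ, ENNReal.ofReal (jap q.1 ^ ((1 / r + ε) * r') *
          jap (q.2 + φ q.1) ^ ((1 / r₁ + ε) * r')) * w q ^ r') ^ (1 / r') := by
  have hr' : 0 < r' := by
    have : 1 / r < 1 := by rw [div_lt_one (by linarith)]; exact hr
    exact one_div_pos.mp (by linarith)
  have hs0 : 0 < s := one_div_pos.mp (by rw [hs]; positivity)
  have hsr₁ : s < r₁ := by
    rw [← one_div_lt_one_div hr₁ hs0, hs]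
    linarith [one_div_pos.mpr hr']
  set G : ℝ → ℝ≥0∞ := fun ξ =>
    ∫⁻ τ, ENNReal.ofReal (jap (τ + φ ξ) ^ ((1 / r₁ + ε) * r')) * w (ξ, τ) ^ r' with hG
  have inner : ∀ ξ, (∫⁻ τ, w (ξ, τ) ^ s) ^ (1 / s) ≤
      japIntegral (1 + ε * r₁) ^ (1 / r₁) * G ξ ^ (1 / r') :=
    fun ξ => lintegral_rpow_le_jap_weighted hs0 hsr₁ (by rw [hs, add_comm])
      (by field_simp) (φ ξ) (hw.comp measurable_prodMk_left).aemeasurable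
  have hGm : Measurable G := Measurable.lintegral_prod_right (by fun_prop)
  have outer : ∫⁻ ξ, G ξ ^ (1 / r') ≤
      japIntegral (1 + ε * r) ^ (1 / r) *
        (∫⁻ ξ, ENNReal.ofReal (jap ξ ^ ((1 / r + ε) * r')) * G ξ) ^ (1 / r') := by
    have h := lintegral_rpow_le_jap_weighted (b := (1 / r + ε) * r') (β := 1 + ε * r)
      one_pos hr (by rw [hrr']; norm_num) (by field_simp) 0 (hGm.pow_const (1 / r')).aemeasurable
    simpa only [ENNReal.rpow_one, div_one, add_zero, ← ENNReal.rpow_mul,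
      one_div_mul_cancel hr'.ne'] using h
  have fubini : ∫⁻ ξ, ENNReal.ofReal (jap ξ ^ ((1 / r + ε) * r')) * G ξ =
      ∫⁻ q : ℝ × ℝ, ENNReal.ofReal (jap q.1 ^ ((1 / r + ε) * r') *
        jap (q.2 + φ q.1) ^ ((1 / r₁ + ε) * r')) * w q ^ r' := by
    rw [Measure.volume_eq_prod, lintegral_prod _ (by fun_prop)]
    refine lintegral_congr fun ξ => ?_
    rw [hG, ← lintegral_const_mul' _ _ ENNReal.ofReal_ne_top]
    refine lintegral_congr fun τ => ?_
    rw [ENNReal.ofReal_mul (Real.rpow_nonneg (jap_pos _).le _), mul_assoc]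
  calc ∫⁻ ξ, (∫⁻ τ, w (ξ, τ) ^ s) ^ (1 / s)
      ≤ ∫⁻ ξ, japIntegral (1 + ε * r₁) ^ (1 / r₁) * G ξ ^ (1 / r') :=
        lintegral_mono inner
    _ = japIntegral (1 + ε * r₁) ^ (1 / r₁) * ∫⁻ ξ, G ξ ^ (1 / r') :=
        lintegral_const_mul' _ _ (ENNReal.rpow_ne_top_of_nonneg (by positivity)
          (japIntegral_ne_top (by nlinarith)))
    _ ≤ _ := by
        rw [mul_assoc, ← fubini]
        gcongr

theorem stmt_9_general (r r₁ r₂ r' r₂' ε : ℝ)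
    (hr : 1 < r) (hr₁ : 1 < r₁) (hr₂ : 1 / r₂ = 1 / r - 1 / r₁)
    (hr' : 1 / r + 1 / r' = 1) (hr₂' : 1 / r₂ + 1 / r₂' = 1) (hε : 0 < ε) :
    ∃ c : ℝ, 0 < c ∧ ∀ φ : ℝ → ℝ, Measurable φ → ∀ w : ℝ × ℝ → ENNReal, Measurable w →
      (∫⁻ ξ : ℝ, (∫⁻ τ : ℝ, w (ξ, τ) ^ r₂') ^ (1 / r₂')) ≤
        ENNReal.ofReal c *
          (∫⁻ q : ℝ × ℝ,
            ENNReal.ofReal (jap q.1 ^ ((1 / r + ε) * r') *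
              jap (q.2 + φ q.1) ^ ((1 / r₁ + ε) * r')) * w q ^ r') ^ (1 / r') := by
  set C : ℝ≥0∞ := japIntegral (1 + ε * r₁) ^ (1 / r₁) * japIntegral (1 + ε * r) ^ (1 / r)
  have hC : C ≠ ∞ := ENNReal.mul_ne_top
    (ENNReal.rpow_ne_top_of_nonneg (by positivity) (japIntegral_ne_top (by nlinarith)))
    (ENNReal.rpow_ne_top_of_nonneg (by positivity) (japIntegral_ne_top (by nlinarith)))
  refine ⟨C.toReal + 1, by positivity, fun φ hφ w hw => ?_⟩
  have hCc : C ≤ ENNReal.ofReal (C.toReal + 1) :=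
    ENNReal.le_ofReal_iff_toReal_le hC (by positivity) |>.mpr (by linarith)
  calc _ ≤ C * _ :=
        lintegral_lintegral_rpow_le_jap_weighted hr hr' (by linarith) (by linarith) hε hφ hw
    _ ≤ _ := by gcongr

/-- Embedding (2.5), Fourier-side:
∫_ξ (∫_τ w^{r₂′})^{1/r₂′} dξ ≤ c (∫∫ ⟨ξ⟩^{(1/r+ε)r′} ⟨τ+φ(ξ)⟩^{(1/r₁+ε)r′} w^{r′})^{1/r′},
where 1/r₂ = 1/r − 1/r₁, with c independent of φ. -/
theorem stmt_9 (r r₁ r₂ r' r₂' ε : ℝ)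
    (hr : 1 < r) (hr₁ : 1 < r₁) (h : 1 / r > 1 / r₁) (hr₂ : 1 / r₂ = 1 / r - 1 / r₁)
    (hr' : 1 / r + 1 / r' = 1) (hr₂' : 1 / r₂ + 1 / r₂' = 1) (hε : 0 < ε) :
    ∃ c : ℝ, 0 < c ∧ ∀ φ : ℝ → ℝ, Measurable φ → ∀ w : ℝ × ℝ → ENNReal, Measurable w →
      (∫⁻ ξ : ℝ, (∫⁻ τ : ℝ, w (ξ, τ) ^ r₂') ^ (1 / r₂')) ≤
        ENNReal.ofReal c *
          (∫⁻ q : ℝ × ℝ,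
            ENNReal.ofReal (jap q.1 ^ ((1 / r + ε) * r') *
              jap (q.2 + φ q.1) ^ ((1 / r₁ + ε) * r')) * w q ^ r') ^ (1 / r') :=
  stmt_9_general r r₁ r₂ r' r₂' ε hr hr₁ hr₂ hr' hr₂' hε
end
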